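/- Let γ > 1, δ = 2(1+2^γ)ζ(γ), and c, d > 0 be such that r₊ := (c/d)·(δ + √(δ² + 8ζ(2γ)))/2 < 1. Let N ≥ 1 and let A ∈ M_N(ℂ) satisfy |A_{ij}| ≤ c/|i−j|^γ for all i ≠ j and |A_{ii}| ≥ d for all i. Set D = diag(A_{11}, …, A_{NN}) and B = I_N − D^{−1}A. Then for every integer k ≥ 1 and all indices i ≠ j, |(B^k)_{ij}| ≤ (c/d) r₊^{k−1} / |i−j|^γ, and for every k ≥ 2 and all i, |(B^k)_{ii}| ≤ 2 ζ(2γ) (c/d)² r₊^{k−2}. -/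

import Mathlib

/-!
With `q = c/d`, the matrix `B = I - D⁻¹A` has zero diagonal and `|B_ij| ≤ q/|i-j|^γ`. Expanding
`B^{k+1} = B·B^k`, the off-diagonal entries of `B^{k+1}` are controlled through the convolution
estimate `∑_l |i-l|^{-γ} |l-j|^{-γ} ≤ δ |i-j|^{-γ}` plus the diagonal of `B^k`, and its diagonal
entries through `∑_l |i-l|^{-2γ} ≤ 2ζ(2γ)`. If `a_k` bounds the off-diagonal decay constant and
`b_k` the diagonal of `B^k`, this gives `a_{k+1} = q(δ a_k + b_k)`, `b_{k+1} = 2ζ(2γ) q a_k` with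
`b_1 = 0`, and `a_k = q r₊^{k-1}` solves the recursion because `r₊² = q δ r₊ + 2ζ(2γ) q²`.
-/

/-- The Riemann zeta function for real `x > 1`, `ζ(x) = Σ_{n ≥ 1} n^{−x}`. -/
noncomputable def zetaR (x : ℝ) : ℝ := ∑' n : ℕ, (1 : ℝ) / ((n : ℝ) + 1) ^ x

/-- `δ = 2(1+2^γ)ζ(γ)`. -/
noncomputable def deltaG (γ : ℝ) : ℝ := 2 * (1 + 2 ^ γ) * zetaR γ

/-- `r₊ = (c/d)·(δ + √(δ² + 8ζ(2γ)))/2`. -/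
noncomputable def rPlus (γ c d : ℝ) : ℝ :=
  (c / d) * ((deltaG γ + Real.sqrt (deltaG γ ^ 2 + 8 * zetaR (2 * γ))) / 2)

lemma zetaR_nonneg (x : ℝ) : 0 ≤ zetaR x :=
  tsum_nonneg fun n => by positivity

lemma deltaG_nonneg (γ : ℝ) : 0 ≤ deltaG γ := by
  unfold deltaG
  positivity [zetaR_nonneg γ]

lemma zetaR_eq_tsum_one_div_nat_rpow {x : ℝ} (hx : 1 < x) :
    zetaR x = ∑' n : ℕ, 1 / (n : ℝ) ^ x := by
  rw [(Real.summable_one_div_nat_rpow.mpr hx).tsum_eq_zero_add]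
  simp [zetaR, Real.zero_rpow (by positivity : x ≠ 0)]

lemma sum_one_div_nat_rpow_le_zetaR {x : ℝ} (hx : 1 < x) (s : Finset ℕ) :
    ∑ n ∈ s, 1 / (n : ℝ) ^ x ≤ zetaR x := by
  rw [zetaR_eq_tsum_one_div_nat_rpow hx]
  exact (Real.summable_one_div_nat_rpow.mpr hx).sum_le_tsum s fun n _ => by positivity

/-- On a half-line `{l | 0 ≤ (l - p) * D}` the distance `|p - l|` determines `l`. -/
lemma sum_one_div_abs_sub_rpow_le_zetaR {x : ℝ} (hx : 1 < x) {p D : ℤ} (hD : D ≠ 0)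
    (s : Finset ℤ) (hs : ∀ l ∈ s, 0 ≤ (l - p) * D) :
    ∑ l ∈ s, 1 / |(p : ℝ) - l| ^ x ≤ zetaR x := by
  have hinj : Set.InjOn (fun l => (p - l).natAbs) s := by
    intro l hl l' hl' h
    have hl := hs l hl
    have hl' := hs l' hl'
    rcases Int.natAbs_eq_natAbs_iff.mp h with h | h
    · omega
    · rw [show l' - p = -(l - p) by omega, neg_mul] at hl'
      have h0 : (l - p) * D = 0 := by linarith
      have := (mul_eq_zero.mp h0).resolve_right hD
      omega
  calc ∑ l ∈ s, 1 / |(p : ℝ) - l| ^ x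
      = ∑ l ∈ s, 1 / ((p - l).natAbs : ℝ) ^ x := by simp [Nat.cast_natAbs]
    _ = ∑ n ∈ s.image fun l => (p - l).natAbs, 1 / (n : ℝ) ^ x :=
        (Finset.sum_image (f := fun n : ℕ => 1 / (n : ℝ) ^ x) hinj).symm
    _ ≤ zetaR x := sum_one_div_nat_rpow_le_zetaR hx _

-- A term `l = p` is harmless: it equals `1 / 0 ^ x = 0`.
lemma sum_one_div_abs_sub_rpow_le_two_mul_zetaR {x : ℝ} (hx : 1 < x) (p : ℤ) (s : Finset ℤ) :
    ∑ l ∈ s, 1 / |(p : ℝ) - l| ^ x ≤ 2 * zetaR x := by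
  rw [← Finset.sum_filter_add_sum_filter_not s fun l => p ≤ l, two_mul]
  gcongr
  · exact sum_one_div_abs_sub_rpow_le_zetaR hx one_ne_zero _ fun l hl => by
      simp only [Finset.mem_filter] at hl; linarith
  · exact sum_one_div_abs_sub_rpow_le_zetaR hx (neg_ne_zero.mpr one_ne_zero) _ fun l hl => by
      simp only [Finset.mem_filter] at hl; linarith

lemma sum_mul_one_div_abs_sub_rpow_le {x K : ℝ} (hx : 1 < x) (hK : 0 ≤ K) {p D : ℤ}
    (hD : D ≠ 0) (s : Finset ℤ) (hs : ∀ l ∈ s, 0 ≤ (l - p) * D) (f : ℤ → ℝ)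
    (hf : ∀ l ∈ s, f l ≤ K) :
    ∑ l ∈ s, f l * (1 / |(p : ℝ) - l| ^ x) ≤ K * zetaR x :=
  calc ∑ l ∈ s, f l * (1 / |(p : ℝ) - l| ^ x)
      ≤ ∑ l ∈ s, K * (1 / |(p : ℝ) - l| ^ x) :=
        Finset.sum_le_sum fun l hl => by gcongr; exact hf l hl
    _ ≤ K * zetaR x := by
        rw [← Finset.mul_sum]
        exact mul_le_mul_of_nonneg_left (sum_one_div_abs_sub_rpow_le_zetaR hx hD s hs) hK

lemma one_div_rpow_le_of_le {n y γ : ℝ} (hn : 0 < n) (h : n ≤ y) (hγ : 0 ≤ γ) :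
    1 / y ^ γ ≤ 1 / n ^ γ :=
  one_div_le_one_div_of_le (by positivity) (Real.rpow_le_rpow hn.le h hγ)

/-- For `l` closer to `p` than to `q`, the factor `|l - q|^{-γ}` is at most `(2/|p - q|)^γ`, and
at most `|p - q|^{-γ}` when `l` lies beyond `p`; the remaining factor `|p - l|^{-γ}` is summed
over a half-line on each side of `p`. -/
lemma sum_convolution_le_of_abs_le {γ : ℝ} (hγ : 1 < γ) {p q : ℤ} (hpq : p ≠ q) (s : Finset ℤ)
    (hs : ∀ l ∈ s, |p - l| ≤ |l - q|) :
    ∑ l ∈ s, 1 / (|(p : ℝ) - l| ^ γ * |(l : ℝ) - q| ^ γ)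
      ≤ (1 + 2 ^ γ) * zetaR γ / |(p : ℝ) - q| ^ γ := by
  have hγ0 : 0 ≤ γ := by linarith
  have hn : 0 < |(p : ℝ) - q| := abs_pos.mpr (sub_ne_zero.mpr (by exact_mod_cast hpq))
  have hD : q - p ≠ 0 := sub_ne_zero.mpr hpq.symm
  simp_rw [← one_div_mul_one_div_rev]
  rw [← Finset.sum_filter_add_sum_filter_not s fun l => (l - p) * (q - p) < 0]
  have hbeyond : ∑ l ∈ s with (l - p) * (q - p) < 0,
      1 / |(l : ℝ) - q| ^ γ * (1 / |(p : ℝ) - l| ^ γ) ≤ 1 / |(p : ℝ) - q| ^ γ * zetaR γ := by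
    refine sum_mul_one_div_abs_sub_rpow_le hγ (by positivity) (neg_ne_zero.mpr hD) _
      (fun l hl => by simp only [Finset.mem_filter] at hl; nlinarith) _ fun l hl => ?_
    simp only [Finset.mem_filter] at hl
    have h : |p - q| ≤ |l - q| := sq_le_sq.mp (by nlinarith)
    exact one_div_rpow_le_of_le hn (by exact_mod_cast h) hγ0
  have hbetween : ∑ l ∈ s with ¬(l - p) * (q - p) < 0,
      1 / |(l : ℝ) - q| ^ γ * (1 / |(p : ℝ) - l| ^ γ) ≤ 2 ^ γ / |(p : ℝ) - q| ^ γ * zetaR γ := by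
    refine sum_mul_one_div_abs_sub_rpow_le hγ (by positivity) hD _
      (fun l hl => by simp only [Finset.mem_filter] at hl; linarith) _ fun l hl => ?_
    simp only [Finset.mem_filter] at hl
    have h : |p - q| ≤ 2 * |l - q| := by linarith [abs_sub_le p l q, hs l hl.1]
    calc 1 / |(l : ℝ) - q| ^ γ ≤ 1 / (|(p : ℝ) - q| / 2) ^ γ :=
          one_div_rpow_le_of_le (by positivity) (by
            rw [div_le_iff₀ two_pos, mul_comm]; exact_mod_cast h) hγ0
      _ = 2 ^ γ / |(p : ℝ) - q| ^ γ := by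
          rw [Real.div_rpow hn.le zero_le_two, one_div_div]
  calc _ ≤ 1 / |(p : ℝ) - q| ^ γ * zetaR γ + 2 ^ γ / |(p : ℝ) - q| ^ γ * zetaR γ :=
        add_le_add hbeyond hbetween
    _ = (1 + 2 ^ γ) * zetaR γ / |(p : ℝ) - q| ^ γ := by ring

theorem sum_convolution_le {γ : ℝ} (hγ : 1 < γ) {p q : ℤ} (hpq : p ≠ q) (s : Finset ℤ) :
    ∑ l ∈ s, 1 / (|(p : ℝ) - l| ^ γ * |(l : ℝ) - q| ^ γ) ≤ deltaG γ / |(p : ℝ) - q| ^ γ := by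
  rw [← Finset.sum_filter_add_sum_filter_not s fun l => |p - l| ≤ |l - q|]
  have hp := sum_convolution_le_of_abs_le hγ hpq (s.filter fun l => |p - l| ≤ |l - q|)
    fun l hl => (Finset.mem_filter.mp hl).2
  have hq := sum_convolution_le_of_abs_le hγ hpq.symm (s.filter fun l => ¬|p - l| ≤ |l - q|)
    fun l hl => by
      rw [abs_sub_comm q l, abs_sub_comm l p]
      exact (not_le.mp (Finset.mem_filter.mp hl).2).le
  simp only [abs_sub_comm (q : ℝ) (p : ℝ)] at hq
  calc _ ≤ _ := add_le_add hp ((Finset.sum_congr rfl fun l _ => by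
          rw [mul_comm, abs_sub_comm (p : ℝ) l, abs_sub_comm (l : ℝ) q]).trans_le hq)
    _ = deltaG γ / |(p : ℝ) - q| ^ γ := by rw [deltaG]; ring

def OffDiagDecay {ι R : Type*} [Norm R] (x : ι → ℤ) (γ a : ℝ) (A : Matrix ι ι R) : Prop :=
  ∀ i j, i ≠ j → ‖A i j‖ ≤ a / |(x i : ℝ) - x j| ^ γ

section Decay

open Function

variable {ι R : Type*} [NormedRing R] {x : ι → ℤ} {γ a b q : ℝ} {A B C : Matrix ι ι R}

lemma OffDiagDecay.mono (hA : OffDiagDecay x γ a A) (hab : a ≤ b) : OffDiagDecay x γ b A :=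
  fun i j hij => (hA i j hij).trans (by gcongr)

lemma sum_convolution_le_of_injective (hx : Injective x) (hγ : 1 < γ) {i j : ι} (hij : i ≠ j)
    (s : Finset ι) :
    ∑ l ∈ s, 1 / (|(x i : ℝ) - x l| ^ γ * |(x l : ℝ) - x j| ^ γ)
      ≤ deltaG γ / |(x i : ℝ) - x j| ^ γ :=
  (Finset.sum_image (f := fun m : ℤ => 1 / (|(x i : ℝ) - m| ^ γ * |(m : ℝ) - x j| ^ γ))
    hx.injOn).symm.trans_le (sum_convolution_le hγ (hx.ne hij) _)

lemma sum_one_div_abs_sub_rpow_le_two_mul_zetaR_of_injective (hx : Injective x) (hγ : 1 < γ)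
    (i : ι) (s : Finset ι) :
    ∑ l ∈ s, 1 / |(x i : ℝ) - x l| ^ γ ≤ 2 * zetaR γ :=
  (Finset.sum_image (f := fun m : ℤ => 1 / |(x i : ℝ) - m| ^ γ) hx.injOn).symm.trans_le
    (sum_one_div_abs_sub_rpow_le_two_mul_zetaR hγ _ _)

variable [Fintype ι] [DecidableEq ι]

theorem OffDiagDecay.mul (hx : Injective x) (hγ : 1 < γ) (hq : 0 ≤ q) (ha : 0 ≤ a)
    (hB0 : ∀ i, B i i = 0) (hB : OffDiagDecay x γ q B) (hC : OffDiagDecay x γ a C)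
    (hCd : ∀ i, ‖C i i‖ ≤ b) :
    OffDiagDecay x γ (q * (deltaG γ * a + b)) (B * C) := by
  intro i j hij
  have hj : j ∈ Finset.univ.erase i := Finset.mem_erase.mpr ⟨hij.symm, Finset.mem_univ j⟩
  rw [Matrix.mul_apply, ← Finset.add_sum_erase _ _ (Finset.mem_univ i), hB0, zero_mul, zero_add,
    ← Finset.add_sum_erase _ _ hj]
  calc _ ≤ ‖B i j‖ * ‖C j j‖ + ∑ l ∈ (Finset.univ.erase i).erase j, ‖B i l‖ * ‖C l j‖ :=
        (norm_add_le _ _).trans (add_le_add (norm_mul_le _ _)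
          ((norm_sum_le _ _).trans (Finset.sum_le_sum fun l _ => norm_mul_le _ _)))
    _ ≤ q / |(x i : ℝ) - x j| ^ γ * b + ∑ l ∈ (Finset.univ.erase i).erase j,
          q * a * (1 / (|(x i : ℝ) - x l| ^ γ * |(x l : ℝ) - x j| ^ γ)) := by
        refine add_le_add (mul_le_mul (hB i j hij) (hCd j) (norm_nonneg _) (by positivity))
          (Finset.sum_le_sum fun l hl => ?_)
        obtain ⟨hlj, hli⟩ : l ≠ j ∧ l ≠ i := by simpa using hl
        calc ‖B i l‖ * ‖C l j‖
            ≤ q / |(x i : ℝ) - x l| ^ γ * (a / |(x l : ℝ) - x j| ^ γ) :=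
              mul_le_mul (hB i l (Ne.symm hli)) (hC l j hlj) (norm_nonneg _) (by positivity)
          _ = _ := by ring
    _ ≤ q / |(x i : ℝ) - x j| ^ γ * b + q * a * (deltaG γ / |(x i : ℝ) - x j| ^ γ) := by
        rw [← Finset.mul_sum]
        gcongr
        exact sum_convolution_le_of_injective hx hγ hij _
    _ = q * (deltaG γ * a + b) / |(x i : ℝ) - x j| ^ γ := by ring

theorem norm_mul_apply_self_le (hx : Injective x) (hγ : 1 < γ) (hq : 0 ≤ q) (ha : 0 ≤ a)
    (hB0 : ∀ i, B i i = 0) (hB : OffDiagDecay x γ q B) (hC : OffDiagDecay x γ a C) (i : ι) :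
    ‖(B * C) i i‖ ≤ 2 * zetaR (2 * γ) * q * a := by
  rw [Matrix.mul_apply, ← Finset.add_sum_erase _ _ (Finset.mem_univ i), hB0, zero_mul, zero_add]
  calc _ ≤ ∑ l ∈ Finset.univ.erase i, ‖B i l‖ * ‖C l i‖ :=
        (norm_sum_le _ _).trans (Finset.sum_le_sum fun l _ => norm_mul_le _ _)
    _ ≤ ∑ l ∈ Finset.univ.erase i, q * a * (1 / |(x i : ℝ) - x l| ^ (2 * γ)) := by
        refine Finset.sum_le_sum fun l hl => ?_
        have hli : l ≠ i := Finset.ne_of_mem_erase hl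
        calc ‖B i l‖ * ‖C l i‖
            ≤ q / |(x i : ℝ) - x l| ^ γ * (a / |(x l : ℝ) - x i| ^ γ) :=
              mul_le_mul (hB i l hli.symm) (hC l i hli) (norm_nonneg _) (by positivity)
          _ = _ := by
              rw [abs_sub_comm (x l : ℝ), two_mul, Real.rpow_add' (abs_nonneg _) (by linarith)]
              ring
    _ ≤ q * a * (2 * zetaR (2 * γ)) := by
        rw [← Finset.mul_sum]
        gcongr
        exact sum_one_div_abs_sub_rpow_le_two_mul_zetaR_of_injective hx (by linarith) i _
    _ = 2 * zetaR (2 * γ) * q * a := by ring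

/-- `r` is the positive root of `t² = q δ t + 2 ζ(2γ) q²`, the characteristic equation of the
two-term recursion satisfied by the off-diagonal constants `q r^{k-1}`. -/
theorem OffDiagDecay.pow (hx : Injective x) (hγ : 1 < γ) (hq : 0 ≤ q) (hB0 : ∀ i, B i i = 0)
    (hB : OffDiagDecay x γ q B) {r : ℝ} (hr : q * deltaG γ ≤ r)
    (hr2 : r ^ 2 = q * deltaG γ * r + 2 * zetaR (2 * γ) * q ^ 2) (m : ℕ) :
    OffDiagDecay x γ (q * r ^ (m + 1)) (B ^ (m + 2)) ∧
      ∀ i, ‖(B ^ (m + 2)) i i‖ ≤ 2 * zetaR (2 * γ) * q ^ 2 * r ^ m := by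
  have hr0 : 0 ≤ r := (mul_nonneg hq (deltaG_nonneg γ)).trans hr
  induction m with
  | zero =>
    rw [zero_add, sq]
    constructor
    · refine (hB.mul hx hγ hq hq hB0 hB (b := 0) fun i => by simp [hB0]).mono ?_
      rw [add_zero, pow_one, mul_comm (deltaG γ)]
      exact mul_le_mul_of_nonneg_left hr hq
    · intro i
      refine (norm_mul_apply_self_le hx hγ hq hq hB0 hB hB i).trans_eq ?_
      ring
  | succ m ih =>
    rw [show m + 1 + 2 = m + 2 + 1 by ring, pow_succ' B]
    constructor
    · refine (hB.mul hx hγ hq (by positivity) hB0 ih.1 ih.2).mono (le_of_eq ?_)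
      linear_combination (-(q * r ^ m)) * hr2
    · intro i
      refine (norm_mul_apply_self_le hx hγ hq (by positivity) hB0 hB ih.1 i).trans_eq ?_
      ring

end Decay

lemma rPlus_sq (γ c d : ℝ) :
    rPlus γ c d ^ 2 = c / d * deltaG γ * rPlus γ c d + 2 * zetaR (2 * γ) * (c / d) ^ 2 := by
  have h := Real.sq_sqrt (by positivity [zetaR_nonneg (2 * γ)] :
    0 ≤ deltaG γ ^ 2 + 8 * zetaR (2 * γ))
  unfold rPlus
  linear_combination (c / d) ^ 2 / 4 * h

lemma mul_deltaG_le_rPlus (γ : ℝ) {c d : ℝ} (hcd : 0 ≤ c / d) : c / d * deltaG γ ≤ rPlus γ c d := by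
  have h : deltaG γ ≤ Real.sqrt (deltaG γ ^ 2 + 8 * zetaR (2 * γ)) :=
    (le_abs_self _).trans (Real.abs_le_sqrt (by linarith [zetaR_nonneg (2 * γ)]))
  unfold rPlus
  gcongr
  linarith

section Jacobi

variable {ι 𝕜 : Type*} [Fintype ι] [DecidableEq ι]

def jacobiMatrix [DivisionRing 𝕜] (M : Matrix ι ι 𝕜) : Matrix ι ι 𝕜 :=
  1 - Matrix.diagonal (fun l => (M l l)⁻¹) * M

lemma jacobiMatrix_apply_self [DivisionRing 𝕜] {M : Matrix ι ι 𝕜} {i : ι} (h : M i i ≠ 0) :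
    jacobiMatrix M i i = 0 := by
  simp [jacobiMatrix, Matrix.diagonal_mul, inv_mul_cancel₀ h]

lemma jacobiMatrix_apply_of_ne [DivisionRing 𝕜] {M : Matrix ι ι 𝕜} {i j : ι} (h : i ≠ j) :
    jacobiMatrix M i j = -((M i i)⁻¹ * M i j) := by
  simp [jacobiMatrix, Matrix.one_apply_ne h, Matrix.diagonal_mul]

lemma OffDiagDecay.jacobiMatrix [NormedDivisionRing 𝕜] {M : Matrix ι ι 𝕜} {x : ι → ℤ}
    {γ c d : ℝ} (hd : 0 < d) (hdiag : ∀ i, d ≤ ‖M i i‖) (hM : OffDiagDecay x γ c M) :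
    OffDiagDecay x γ (c / d) (jacobiMatrix M) := by
  intro i j hij
  rw [jacobiMatrix_apply_of_ne hij, norm_neg, norm_mul, norm_inv]
  calc ‖M i i‖⁻¹ * ‖M i j‖ ≤ d⁻¹ * (c / |(x i : ℝ) - x j| ^ γ) :=
        mul_le_mul (inv_anti₀ hd (hdiag i)) (hM i j hij) (norm_nonneg _) (by positivity)
    _ = c / d / |(x i : ℝ) - x j| ^ γ := by ring

end Jacobi

theorem gershgorin_power_decay_general
    (γ : ℝ) (hγ : 1 < γ) (c d : ℝ) (hc : 0 < c) (hd : 0 < d)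
    (N : ℕ) (M : Matrix (Fin N) (Fin N) ℂ)
    (hoff : ∀ i j : Fin N, i ≠ j → ‖M i j‖ ≤ c / |(i.1 : ℝ) - (j.1 : ℝ)| ^ γ)
    (hdiag : ∀ i : Fin N, d ≤ ‖M i i‖) :
    (∀ k : ℕ, 1 ≤ k → ∀ i j : Fin N, i ≠ j →
      ‖(((1 : Matrix (Fin N) (Fin N) ℂ) -
          (Matrix.diagonal fun l : Fin N => (M l l)⁻¹) * M) ^ k) i j‖ ≤
        (c / d) * rPlus γ c d ^ (k - 1) / |(i.1 : ℝ) - (j.1 : ℝ)| ^ γ) ∧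
    (∀ k : ℕ, 2 ≤ k → ∀ i : Fin N,
      ‖(((1 : Matrix (Fin N) (Fin N) ℂ) -
          (Matrix.diagonal fun l : Fin N => (M l l)⁻¹) * M) ^ k) i i‖ ≤
        2 * zetaR (2 * γ) * (c / d) ^ 2 * rPlus γ c d ^ (k - 2)) := by
  set x : Fin N → ℤ := fun i => i
  have hx : Function.Injective x := fun i j h => Fin.ext (by simpa [x] using h)
  have hq : 0 ≤ c / d := by positivity
  have hB : OffDiagDecay x γ (c / d) (jacobiMatrix M) :=
    OffDiagDecay.jacobiMatrix hd hdiag fun i j hij => by simpa [x] using hoff i j hij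
  have hB0 (i : Fin N) : jacobiMatrix M i i = 0 :=
    jacobiMatrix_apply_self (norm_pos_iff.mp (hd.trans_le (hdiag i)))
  have hpow := OffDiagDecay.pow hx hγ hq hB0 hB (mul_deltaG_le_rPlus γ hq) (rPlus_sq γ c d)
  change (∀ k, 1 ≤ k → ∀ i j, i ≠ j → ‖(jacobiMatrix M ^ k) i j‖ ≤ _) ∧
    ∀ k, 2 ≤ k → ∀ i, ‖(jacobiMatrix M ^ k) i i‖ ≤ _
  refine ⟨fun k hk i j hij => ?_, fun k hk i => ?_⟩
  · obtain rfl | hk := hk.eq_or_lt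
    · simpa [x] using hB i j hij
    · obtain ⟨m, rfl⟩ := Nat.exists_eq_add_of_le' hk
      simpa [x] using (hpow m).1 i j hij
  · obtain ⟨m, rfl⟩ := Nat.exists_eq_add_of_le' hk
    simpa using (hpow m).2 i

/-- Decay estimates for the powers of `B = I − D⁻¹A`, where `D` is the diagonal part
of a matrix `A` with dominant diagonal entries `≥ d` and off-diagonal entries bounded by
`c/|i−j|^γ`. -/
theorem gershgorin_power_decay
    (γ : ℝ) (hγ : 1 < γ) (c d : ℝ) (hc : 0 < c) (hd : 0 < d)
    (hr : rPlus γ c d < 1)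
    (N : ℕ) (hN : 1 ≤ N) (M : Matrix (Fin N) (Fin N) ℂ)
    (hoff : ∀ i j : Fin N, i ≠ j → ‖M i j‖ ≤ c / |(i.1 : ℝ) - (j.1 : ℝ)| ^ γ)
    (hdiag : ∀ i : Fin N, d ≤ ‖M i i‖) :
    (∀ k : ℕ, 1 ≤ k → ∀ i j : Fin N, i ≠ j →
      ‖(((1 : Matrix (Fin N) (Fin N) ℂ) -
          (Matrix.diagonal fun l : Fin N => (M l l)⁻¹) * M) ^ k) i j‖ ≤
        (c / d) * rPlus γ c d ^ (k - 1) / |(i.1 : ℝ) - (j.1 : ℝ)| ^ γ) ∧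
    (∀ k : ℕ, 2 ≤ k → ∀ i : Fin N,
      ‖(((1 : Matrix (Fin N) (Fin N) ℂ) -
          (Matrix.diagonal fun l : Fin N => (M l l)⁻¹) * M) ^ k) i i‖ ≤
        2 * zetaR (2 * γ) * (c / d) ^ 2 * rPlus γ c d ^ (k - 2)) :=
  gershgorin_power_decay_general γ hγ c d hc hd N M hoff hdiag
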